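/- There exists N ∈ ℕ such that for all n ≥ N, the function J_n : [r_{n−1}, ∞) → ℝ defined by J_n(r) = a_{n−1}·exp(r^{2^{n−1}}) − a_n·exp(r^{2^n}) + 3·(1+r)^2·2^{−4(n−1)}, where a_m = exp(−(r_m + 3)^{2^m}), satisfies J_n(r_n + 3) > 0 and J_n(r_n + 4) < 0; hence J_n has a zero ρ_n ∈ (r_n + 3, r_n + 4). -/

import Mathlib

open Real

noncomputable def tseq (m : ℕ) : ℝ := 4 * Real.pi * (2 : ℝ) ^ (-(m : ℤ)) * (m + 13 / 6)

noncomputable def rseq (m : ℕ) : ℝ := 128 * m / tseq m + 1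

noncomputable def aseq (m : ℕ) : ℝ := Real.exp (-(rseq m + 3) ^ (2 ^ m))

noncomputable def Jfun (n : ℕ) (r : ℝ) : ℝ :=
  aseq (n - 1) * Real.exp (r ^ (2 ^ (n - 1))) - aseq n * Real.exp (r ^ (2 ^ n)) +
    3 * (1 + r) ^ 2 * (2 : ℝ) ^ (-(4 * ((n : ℤ) - 1)))

/-!
At `x = r_n + 3` the middle term of `J_n` equals `1` by the choice of `a_n`, while the first term is
at least `1` because `r_{n-1} ≤ r_n`; so `J_n(x) > 0`. At `x + 1`, with `y = x^{2^n}`, Bernoulli's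
inequality and `x ≤ 12·2^n` make the middle term at least `exp(y/12)`, whereas
`(x+1)^{2^{n-1}}(x-1) ≤ x^{2^n}` bounds the first term by `exp(y/24)` and the last term is
polynomial in `x`; hence `J_n(x + 1) < 0`, and the intermediate value theorem gives the zero.
-/

lemma rseq_eq (m : ℕ) : rseq m = 32 * m * 2 ^ m / (π * (m + 13 / 6)) + 1 := by
  unfold rseq tseq
  rw [zpow_neg, zpow_natCast]
  field_simp
  ring

lemma one_le_rseq (m : ℕ) : 1 ≤ rseq m := by
  rw [rseq_eq]
  have : 0 ≤ 32 * m * 2 ^ m / (π * (m + 13 / 6)) := by positivity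
  linarith

lemma rseq_monotone : Monotone rseq := by
  refine monotone_nat_of_le_succ fun m => ?_
  simp only [rseq_eq, add_le_add_iff_right, Nat.cast_succ, pow_succ]
  rw [div_le_div_iff₀ (by positivity) (by positivity)]
  have h2m : (0 : ℝ) ≤ 2 ^ m := by positivity
  have hm : (0 : ℝ) ≤ m := m.cast_nonneg
  have key : (m : ℝ) * (m + 1 + 13 / 6) ≤ (m + 1) * 2 * (m + 13 / 6) := by nlinarith
  have := mul_le_mul_of_nonneg_left key (by positivity : (0 : ℝ) ≤ 32 * 2 ^ m * π)
  nlinarith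

lemma two_pow_lt_rseq {m : ℕ} (hm : 1 ≤ m) : 2 ^ m < rseq m := by
  have hm' : (1 : ℝ) ≤ m := by exact_mod_cast hm
  have hden : 0 < π * (m + 13 / 6) := by positivity
  have hπ : π * (m + 13 / 6) ≤ 32 * m := by nlinarith [pi_lt_four]
  have : 2 ^ m ≤ 32 * m * 2 ^ m / (π * (m + 13 / 6)) := by
    rw [le_div_iff₀ hden]
    nlinarith [(by positivity : (0 : ℝ) < 2 ^ m)]
  rw [rseq_eq]
  linarith

lemma rseq_lt_eleven_mul_two_pow {m : ℕ} (hm : 2 ≤ m) : rseq m < 11 * 2 ^ m := by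
  have h4 : (4 : ℝ) ≤ 2 ^ m := by
    calc (4 : ℝ) = 2 ^ 2 := by norm_num
      _ ≤ 2 ^ m := pow_le_pow_right₀ one_le_two hm
  have hden : 0 < π * (m + 13 / 6) := by positivity
  have hπ : 3 * (m + 13 / 6) < π * (m + 13 / 6) := by nlinarith [pi_gt_three]
  have : 32 * m * 2 ^ m / (π * (m + 13 / 6)) < 11 * 2 ^ m - 1 := by
    rw [div_lt_iff₀ hden]
    nlinarith [mul_lt_mul_of_pos_left hπ (by linarith : (0 : ℝ) < 11 * 2 ^ m - 1)]
  rw [rseq_eq]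
  linarith

lemma aseq_mul_exp (m : ℕ) (r : ℝ) :
    aseq m * exp (r ^ 2 ^ m) = exp (r ^ 2 ^ m - (rseq m + 3) ^ 2 ^ m) := by
  rw [aseq, ← exp_add]
  ring_nf

lemma Jfun_succ (m : ℕ) (r : ℝ) :
    Jfun (m + 1) r = exp (r ^ 2 ^ m - (rseq m + 3) ^ 2 ^ m) -
      exp (r ^ 2 ^ (m + 1) - (rseq (m + 1) + 3) ^ 2 ^ (m + 1)) +
        3 * (1 + r) ^ 2 * (2 : ℝ) ^ (-(4 * (m : ℤ))) := by
  rw [Jfun, Nat.add_sub_cancel, aseq_mul_exp, aseq_mul_exp]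
  push_cast
  ring_nf

lemma Jfun_continuous (n : ℕ) : Continuous (Jfun n) := by
  unfold Jfun
  fun_prop

lemma pow_mul_one_add_div_le {x : ℝ} (hx : 0 < x) (k : ℕ) :
    x ^ k * (1 + k / x) ≤ (x + 1) ^ k := by
  have hb := one_add_mul_le_pow (a := 1 / x) (by linarith [one_div_pos.mpr hx]) k
  calc x ^ k * (1 + k / x) = x ^ k * (1 + k * (1 / x)) := by ring
    _ ≤ x ^ k * (1 + 1 / x) ^ k := by gcongr
    _ = (x + 1) ^ k := by rw [← mul_pow]; congr 1; field_simp

lemma add_one_pow_mul_sub_one_le {x : ℝ} (hx : 2 ≤ x) {k : ℕ} (hk : k ≠ 0) :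
    (x + 1) ^ k * (x - 1) ≤ x ^ (2 * k) := by
  calc (x + 1) ^ k * (x - 1) ≤ (x + 1) ^ k * (x - 1) ^ k := by
        gcongr
        exact le_self_pow₀ (by linarith) hk
    _ = (x ^ 2 - 1) ^ k := by rw [← mul_pow]; ring
    _ ≤ (x ^ 2) ^ k := by gcongr <;> nlinarith
    _ = x ^ (2 * k) := by rw [pow_mul]

lemma exp_add_lt_exp_two_mul {t u v : ℝ} (ht : 1 ≤ t) (hu : u ≤ t) (hv : v ≤ t) :
    exp u + v < exp (2 * t) := by
  have h2 : 2 < exp t := by linarith [exp_one_gt_d9, exp_le_exp.mpr ht]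
  have hv' : v < exp t := by linarith [add_one_le_exp t]
  have hexp : exp (2 * t) = exp t * exp t := by rw [two_mul, exp_add]
  nlinarith [exp_le_exp.mpr hu]

lemma Jfun_succ_pos (m : ℕ) : 0 < Jfun (m + 1) (rseq (m + 1) + 3) := by
  have hr : rseq m + 3 ≤ rseq (m + 1) + 3 := by linarith [rseq_monotone m.le_succ]
  have hfirst : 1 ≤ exp ((rseq (m + 1) + 3) ^ 2 ^ m - (rseq m + 3) ^ 2 ^ m) := by
    rw [one_le_exp_iff, sub_nonneg]
    exact pow_le_pow_left₀ (by linarith [one_le_rseq m]) hr _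
  have hlast : 0 < 3 * (1 + (rseq (m + 1) + 3)) ^ 2 * (2 : ℝ) ^ (-(4 * (m : ℤ))) := by
    have := one_le_rseq (m + 1)
    positivity
  rw [Jfun_succ, sub_self, exp_zero]
  linarith

lemma Jfun_succ_neg {m : ℕ} (hm : 1 ≤ m) (hx : 25 ≤ rseq (m + 1) + 3)
    (hx' : rseq (m + 1) + 3 ≤ 12 * 2 ^ (m + 1)) : Jfun (m + 1) (rseq (m + 1) + 4) < 0 := by
  set x := rseq (m + 1) + 3
  set y := x ^ 2 ^ (m + 1)
  have hK : 2 ^ (m + 1) = 2 * 2 ^ m := by rw [pow_succ]; ring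
  have hx4 : x ^ 4 ≤ y :=
    pow_le_pow_right₀ (by linarith) (Nat.pow_le_pow_right two_pos (by omega : 2 ≤ m + 1))
  have hy : 24 ≤ y := by linarith [le_self_pow₀ (by linarith : 1 ≤ x) (by norm_num : 4 ≠ 0)]
  have hmiddle : y / 12 ≤ (x + 1) ^ 2 ^ (m + 1) - y := by
    have hb := pow_mul_one_add_div_le (by linarith : 0 < x) (2 ^ (m + 1))
    have : 1 / 12 ≤ ((2 ^ (m + 1) : ℕ) : ℝ) / x := by
      rw [div_le_div_iff₀ (by norm_num) (by linarith)]
      push_cast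
      linarith
    nlinarith
  have hfirst : (x + 1) ^ 2 ^ m ≤ y / 24 := by
    have := add_one_pow_mul_sub_one_le (by linarith : (2 : ℝ) ≤ x) (pow_ne_zero m two_ne_zero)
    rw [← hK] at this
    nlinarith [pow_pos (by linarith : (0 : ℝ) < x + 1) (2 ^ m)]
  have hlast : 3 * (1 + (x + 1)) ^ 2 * (2 : ℝ) ^ (-(4 * (m : ℤ))) ≤ y / 24 := by
    have hc : (2 : ℝ) ^ (-(4 * (m : ℤ))) ≤ 1 := zpow_le_one_of_nonpos₀ one_le_two (by omega)
    have h72 : 72 * (x + 2) ^ 2 ≤ x ^ 4 := by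
      have h1 : (x + 2) ^ 2 ≤ 2 * x ^ 2 := by nlinarith
      have h2 : 144 ≤ x ^ 2 := by nlinarith
      nlinarith [mul_le_mul_of_nonneg_left h2 (sq_nonneg x)]
    calc 3 * (1 + (x + 1)) ^ 2 * (2 : ℝ) ^ (-(4 * (m : ℤ))) ≤ 3 * (x + 2) ^ 2 := by
          rw [show 1 + (x + 1) = x + 2 by ring]
          exact mul_le_of_le_one_right (by positivity) hc
      _ ≤ y / 24 := by linarith
  have hrm : 0 ≤ (rseq m + 3) ^ 2 ^ m := by have := one_le_rseq m; positivity
  have key := exp_add_lt_exp_two_mul (u := (x + 1) ^ 2 ^ m - (rseq m + 3) ^ 2 ^ m)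
    (by linarith : 1 ≤ y / 24) (by linarith) hlast
  have hx1 : rseq (m + 1) + 4 = x + 1 := by ring
  rw [hx1, Jfun_succ]
  linarith [exp_le_exp.mpr (by linarith : 2 * (y / 24) ≤ (x + 1) ^ 2 ^ (m + 1) - y)]

theorem stmt_12 :
    ∃ N : ℕ, ∀ n ≥ N,
      Jfun n (rseq n + 3) > 0 ∧ Jfun n (rseq n + 4) < 0 ∧
        ∃ ρ ∈ Set.Ioo (rseq n + 3) (rseq n + 4), Jfun n ρ = 0 := by
  refine ⟨5, fun n hn => ?_⟩
  obtain ⟨m, rfl⟩ : ∃ m, n = m + 1 := ⟨n - 1, by omega⟩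
  have h32 : (32 : ℝ) ≤ 2 ^ (m + 1) := by
    calc (32 : ℝ) = 2 ^ 5 := by norm_num
      _ ≤ 2 ^ (m + 1) := pow_le_pow_right₀ one_le_two hn
  have hpos := Jfun_succ_pos m
  have hneg := Jfun_succ_neg (m := m) (by omega)
    (by linarith [two_pow_lt_rseq (m := m + 1) (by omega)])
    (by linarith [rseq_lt_eleven_mul_two_pow (m := m + 1) (by omega)])
  obtain ⟨ρ, hρ, hρ0⟩ := intermediate_value_Ioo' (by linarith)
    (Jfun_continuous (m + 1)).continuousOn ⟨hneg, hpos⟩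
  exact ⟨hpos, hneg, ρ, hρ, hρ0⟩
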